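/- arXiv:2304.05101 — 2 statements merged into one kernel-verified Lean document; each statement's English description precedes it below -/
import Mathlib

section
/- Let f : X → Y be a function between sets. For each y ∈ Y, let δ_y : ⊕_{x ∈ f⁻¹(y)} ℤ → ℤ be the homomorphism from the free abelian group on the fiber f⁻¹(y) = {x ∈ X | f(x) = y} sending each generator to 1 ∈ ℤ. Then: (1) δ_y is surjective for every y ∈ Y if and only if f is surjective; (2) δ_y is injective for every y ∈ Y if and only if f is injective; (3) δ_y is bijective for every y ∈ Y if and only if f is bijective. -/
open Function

/-- For `f : X → Y` and `y : Y`, the homomorphism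
`δ_y : ⊕_{x ∈ f⁻¹(y)} ℤ ⟶ ℤ` from the free abelian group on the fiber
`f⁻¹(y) = {x : X | f x = y}` sending each generator to `1 : ℤ`
(so `Finsupp.single x 1 ↦ 1`). -/
noncomputable def deltaFiber {X Y : Type*} (f : X → Y) (y : Y) :
    ({x : X // f x = y} →₀ ℤ) →+ ℤ :=
  Finsupp.liftAddHom fun _ => AddMonoidHom.id ℤ

lemma deltaFiber_single {X Y : Type*} (f : X → Y) (y : Y) (x : {x : X // f x = y}) (n : ℤ) :
    deltaFiber f y (Finsupp.single x n) = n := by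
  simp [deltaFiber]

lemma deltaFiber_surj_iff {X Y : Type*} (f : X → Y) :
    (∀ y : Y, Surjective (deltaFiber f y)) ↔ Surjective f := by
  constructor
  · intro h y
    obtain ⟨s, hs⟩ := h y 1
    by_contra hy
    push_neg at hy
    have hs0 : s = 0 := by
      ext ⟨x, hx⟩
      exact absurd hx (hy x)
    rw [hs0, map_zero] at hs
    exact one_ne_zero hs.symm
  · intro hf y z
    obtain ⟨x, hx⟩ := hf y
    exact ⟨Finsupp.single ⟨x, hx⟩ z, deltaFiber_single f y _ z⟩

lemma deltaFiber_inj_iff {X Y : Type*} (f : X → Y) :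
    (∀ y : Y, Injective (deltaFiber f y)) ↔ Injective f := by
  constructor
  · intro h a b hab
    have h1 : deltaFiber f (f a) (Finsupp.single ⟨a, rfl⟩ 1) =
        deltaFiber f (f a) (Finsupp.single ⟨b, hab.symm⟩ 1) := by
      rw [deltaFiber_single, deltaFiber_single]
    have := h (f a) h1
    rcases (Finsupp.single_eq_single_iff _ _ _ _).mp this with ⟨he, -⟩ | ⟨h10, -⟩
    · exact congrArg Subtype.val he
    · exact absurd h10 one_ne_zero
  · intro hf y
    have : Subsingleton {x : X // f x = y} :=
      ⟨fun a b => Subtype.ext (hf (a.2.trans b.2.symm))⟩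
    intro s t hst
    ext a
    have hs : s = Finsupp.single a (s a) := by
      ext b; rw [Subsingleton.elim b a]; simp
    have ht : t = Finsupp.single a (t a) := by
      ext b; rw [Subsingleton.elim b a]; simp
    rw [hs, ht, deltaFiber_single, deltaFiber_single] at hst
    exact hst

/-- **Proposition.** `δ_y` is surjective for every `y` iff `f` is surjective; injective for
every `y` iff `f` is injective; bijective for every `y` iff `f` is bijective.
(This expresses that `[δ̃_f] : (f_!)_[Ab](Ω_X) ⟶ Ω_Y` is an epimorphism, monomorphism,
or isomorphism of Beck modules over `Y` iff `f` is surjective, injective, or bijective.) -/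
theorem deltaFiber_surj_inj_bij_iff {X Y : Type*} (f : X → Y) :
    ((∀ y : Y, Surjective (deltaFiber f y)) ↔ Surjective f) ∧
    ((∀ y : Y, Injective (deltaFiber f y)) ↔ Injective f) ∧
    ((∀ y : Y, Bijective (deltaFiber f y)) ↔ Bijective f) := by
  refine ⟨deltaFiber_surj_iff f, deltaFiber_inj_iff f, ?_⟩
  constructor
  · intro h
    exact ⟨(deltaFiber_inj_iff f).mp fun y => (h y).1,
      (deltaFiber_surj_iff f).mp fun y => (h y).2⟩
  · intro h y
    exact ⟨(deltaFiber_inj_iff f).mpr h.1 y, (deltaFiber_surj_iff f).mpr h.2 y⟩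
end

section
/- Let (A_n)_{n∈ℕ} be a family of abelian groups together with group homomorphisms h : A_n → A_{n+1} for each n (write h^k : A_n → A_{n+k} for the k-fold composite, h^0 = id). Call a family (s_n)_{n∈ℕ} with s_n ∈ A_n a derivation if s_{m+n} = h^n(s_m) + h^m(s_n) for all m, n ∈ ℕ. Then: (1) every derivation satisfies s_0 = 0 and s_n = n · h^{n-1}(s_1) for all n ≥ 1; (2) the map s ↦ s_1 is a bijection from the set of derivations onto A_1, with inverse sending a ∈ A_1 to the family s_0 = 0, s_n = n · h^{n-1}(a) for n ≥ 1. Consequently, the object Ω of the category of such families defined by Ω_0 = 0, Ω_n = ℤ for n ≥ 1 with identity transition maps represents the derivation functor: the families of group homomorphisms (f_n : Ω_n → A_n) with f_{n+1} ∘ h^{(Ω)} = h ∘ f_n are also in natural bijection with A_1, so Ω is the module of differentials Ω_ℕ of the monoid (ℕ,+). -/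
/-- A Beck module over the additive monoid `ℕ`: a family of abelian groups `A n` with
transition homomorphisms `h : A n →+ A (n+1)`.  `hpow h k n : A n →+ A (n+k)` is the
`k`-fold composite `h^k` (with `h^0 = id`). -/
def hpow {A : ℕ → Type*} [∀ n, AddCommGroup (A n)] (h : ∀ n, A n →+ A (n + 1)) :
    ∀ (k n : ℕ), A n →+ A (n + k)
  | 0, n => AddMonoidHom.id (A n)
  | k + 1, n => (h (n + k)).comp (hpow h k n)

/-- A family `(s_n)` with `s_n ∈ A n` is a derivation if
`s (m+n) = h^n (s m) + h^m (s n)` for all `m n` (the second summand being transported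
along `n + m = m + n`). -/
def IsDerivation {A : ℕ → Type*} [∀ n, AddCommGroup (A n)] (h : ∀ n, A n →+ A (n + 1))
    (s : ∀ n, A n) : Prop :=
  ∀ m n : ℕ, s (m + n) =
    hpow h n m (s m) + cast (congrArg A (Nat.add_comm n m)) (hpow h m n (s n))

/-- The module of differentials `Ω_ℕ` of the monoid `(ℕ,+)`: `Ω_0 = 0`, `Ω_n = ℤ` for
`n ≥ 1`. -/
def OmegaNat : ℕ → Type
  | 0 => PUnit
  | _ + 1 => ℤ

instance OmegaNat.addCommGroup : ∀ n, AddCommGroup (OmegaNat n)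
  | 0 => inferInstanceAs (AddCommGroup PUnit)
  | _ + 1 => inferInstanceAs (AddCommGroup ℤ)

/-- The transition maps of `Ω_ℕ`: zero out of `Ω_0`, the identity `ℤ → ℤ` for `n ≥ 1`. -/
def hOmegaNat : ∀ n, OmegaNat n →+ OmegaNat (n + 1)
  | 0 => 0
  | _ + 1 => AddMonoidHom.id ℤ


/- Iterating the Leibniz rule `s (n + 1) = h (s n) + h^n (s 1)` shows that a derivation is
`s n = n • h^(n-1) (s 1)`, and conversely this formula defines a derivation for every
`a ∈ A 1`, because `h^(p+q+1) a` occurs `p + 1` times in `h^(q+1) (s (p+1))` and `q + 1` times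
in `h^(p+1) (s (q+1))`. A compatible family `g n : Ω_n →+ A n` is likewise determined by
`g 1 1`, since `Ω_0 = 0` and `g (n + 1) 1 = h^n (g 1 1)`. -/

theorem cast_congrArg_nsmul {ι : Type*} {B : ι → Type*} [∀ i, AddMonoid (B i)] {m m' : ι}
    (e : m = m') (k : ℕ) (x : B m) :
    cast (congrArg B e) (k • x) = k • cast (congrArg B e) x := by
  subst e; rfl

theorem cast_congrArg_apply {ι : Type*} {B : ι → Type*} (f : ∀ i, B i) {i j : ι}
    (e : i = j) : cast (congrArg B e) (f i) = f j := by
  subst e; rfl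

section BeckModule

variable {A : ℕ → Type*} [∀ n, AddCommGroup (A n)] (h : ∀ n, A n →+ A (n + 1))

theorem map_cast_congrArg {m m' : ℕ} (e : m = m') (e' : m + 1 = m' + 1) (x : A m) :
    h m' (cast (congrArg A e) x) = cast (congrArg A e') (h m x) := by
  subst e; rfl

/-- `orbit h a n = h^n a ∈ A (n + 1)`; unlike `hpow h n 1 a ∈ A (1 + n)` it needs no transport
along `1 + n = n + 1`. -/
def orbit (a : A 1) : ∀ n, A (n + 1)
  | 0 => a
  | n + 1 => h (n + 1) (orbit a n)

theorem cast_orbit (a : A 1) {i j : ℕ} (e : i + 1 = j + 1) :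
    cast (congrArg A e) (orbit h a i) = orbit h a j := by
  obtain rfl : i = j := Nat.succ.inj e
  rfl

theorem hpow_orbit (a : A 1) (k n : ℕ) :
    hpow h k (n + 1) (orbit h a n) = cast (congrArg A (by omega)) (orbit h a (n + k)) := by
  induction k with
  | zero => rfl
  | succ k ih =>
    change h (n + 1 + k) (hpow h k (n + 1) (orbit h a n)) = _
    rw [ih, map_cast_congrArg h (by omega) (by omega)]
    rfl

theorem cast_hpow_one (a : A 1) (n : ℕ) (e : 1 + n = n + 1) :
    cast (congrArg A e) (hpow h n 1 a) = orbit h a n := by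
  rw [show hpow h n 1 a = _ from hpow_orbit h a n 0, cast_cast]
  exact cast_orbit h a (by omega)

def derivationOf (a : A 1) : ∀ n, A n
  | 0 => 0
  | n + 1 => (n + 1) • orbit h a n

theorem derivationOf_isDerivation (a : A 1) : IsDerivation h (derivationOf h a) := by
  rintro (_ | p) (_ | q)
  · exact (add_zero 0).symm
  · change _ = hpow h (q + 1) 0 0 + _
    rw [map_zero]
    exact ((zero_add _).trans
      (cast_congrArg_apply (derivationOf h a) (Nat.add_comm (q + 1) 0))).symm
  · change _ = _ + cast _ (hpow h (p + 1) 0 0)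
    rw [map_zero, cast_congrArg_apply (fun n => (0 : A n)) (Nat.add_comm 0 (p + 1))]
    exact (add_zero _).symm
  · change (p + 1 + q + 1) • orbit h a (p + 1 + q) =
      hpow h (q + 1) (p + 1) ((p + 1) • orbit h a p) +
        cast _ (hpow h (p + 1) (q + 1) ((q + 1) • orbit h a q))
    rw [map_nsmul, map_nsmul, hpow_orbit, hpow_orbit, cast_congrArg_nsmul, cast_cast,
      cast_orbit h a (by omega : p + (q + 1) + 1 = p + 1 + q + 1),
      cast_orbit h a (by omega : q + (p + 1) + 1 = p + 1 + q + 1), ← add_nsmul]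
    congr 1
    omega

theorem IsDerivation.eq_derivationOf {s : ∀ n, A n} (hs : IsDerivation h s) :
    s = derivationOf h (s 1) := by
  funext n
  induction n with
  | zero => exact left_eq_add.mp (hs 0 0)
  | succ n ih =>
    cases n with
    | zero => exact (one_smul ℕ (s 1)).symm
    | succ n =>
      change s (n + 1 + 1) = (n + 1 + 1) • orbit h (s 1) (n + 1)
      rw [hs (n + 1) 1, ih, cast_hpow_one h _ _ (by omega), succ_nsmul]
      exact congrArg (· + _) (map_nsmul (h (n + 1)) _ _)

def derivationEquiv : {s : ∀ n, A n // IsDerivation h s} ≃ A 1 where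
  toFun s := s.1 1
  invFun a := ⟨derivationOf h a, derivationOf_isDerivation h a⟩
  left_inv s := Subtype.ext (s.2.eq_derivationOf h).symm
  right_inv := one_smul ℕ

def IsCompatibleFamily (g : ∀ n, OmegaNat n →+ A n) : Prop :=
  ∀ (n : ℕ) (t : OmegaNat n), g (n + 1) (hOmegaNat n t) = h n (g n t)

def omegaHomOf (a : A 1) : ∀ n, OmegaNat n →+ A n
  | 0 => 0
  | n + 1 => zmultiplesHom (A (n + 1)) (orbit h a n)

theorem omegaHomOf_isCompatibleFamily (a : A 1) : IsCompatibleFamily h (omegaHomOf h a)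
  | 0, _ => (map_zero _).trans (map_zero (h 0)).symm
  | n + 1, t => (map_zsmul (h (n + 1)) t (orbit h a n)).symm

theorem IsCompatibleFamily.eq_omegaHomOf {g : ∀ n, OmegaNat n →+ A n}
    (hg : IsCompatibleFamily h g) : g = omegaHomOf h (g 1 (1 : ℤ)) := by
  funext n
  induction n with
  | zero =>
    exact AddMonoidHom.ext fun t =>
      (congrArg (g 0) (Subsingleton.elim (α := PUnit) t 0)).trans (map_zero _)
  | succ n ih =>
    refine AddMonoidHom.ext_int ?_
    cases n with
    | zero => exact (one_zsmul _).symm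
    | succ n =>
      calc g (n + 2) (1 : ℤ)
          = h (n + 1) (g (n + 1) (1 : ℤ)) := hg (n + 1) (1 : ℤ)
        _ = h (n + 1) ((1 : ℤ) • orbit h (g 1 (1 : ℤ)) n) :=
          congrArg (h (n + 1)) (DFunLike.congr_fun ih (1 : ℤ))
        _ = (1 : ℤ) • orbit h (g 1 (1 : ℤ)) (n + 1) := map_zsmul _ _ _

def compatibleFamilyEquiv : {g : ∀ n, OmegaNat n →+ A n // IsCompatibleFamily h g} ≃ A 1 where
  toFun g := g.1 1 (1 : ℤ)
  invFun a := ⟨omegaHomOf h a, omegaHomOf_isCompatibleFamily h a⟩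
  left_inv g := Subtype.ext (g.2.eq_omegaHomOf h).symm
  right_inv := one_zsmul

end BeckModule

/-- **Proposition.** For a Beck module `(A, h)` over `(ℕ,+)`:
(1) every derivation `s` satisfies `s 0 = 0` and `s (n+1) = (n+1) • h^n (s 1)`;
(2) `s ↦ s 1` is a bijection from the set of derivations onto `A 1`;
(3) `Ω_ℕ` represents the derivation functor: the families of homomorphisms
`f_n : Ω_n →+ A n` commuting with the transition maps are also in bijection with `A 1`
via `f ↦ f 1 (1)`; so `Ω_ℕ` is the module of differentials of `(ℕ,+)`. -/
theorem omegaNat_represents_derivations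
    (A : ℕ → Type*) [∀ n, AddCommGroup (A n)] (h : ∀ n, A n →+ A (n + 1)) :
    (∀ s : ∀ n, A n, IsDerivation h s →
      s 0 = 0 ∧ ∀ n : ℕ, s (n + 1) =
        (n + 1) • cast (congrArg A (Nat.add_comm 1 n)) (hpow h n 1 (s 1))) ∧
    Function.Bijective
      (fun s : {s : ∀ n, A n // IsDerivation h s} => s.1 1) ∧
    Function.Bijective
      (fun F : {g : ∀ n, OmegaNat n →+ A n //
          ∀ (n : ℕ) (t : OmegaNat n), g (n + 1) (hOmegaNat n t) = h n (g n t)} =>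
        (F.1 1) (1 : ℤ)) := by
  refine ⟨fun s hs => ⟨?_, fun n => ?_⟩, (derivationEquiv h).bijective,
    (compatibleFamilyEquiv h).bijective⟩
  · exact congrFun (hs.eq_derivationOf h) 0
  · rw [cast_hpow_one h _ _ (Nat.add_comm 1 n)]
    exact congrFun (hs.eq_derivationOf h) (n + 1)
end
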